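/- For any set a, levof(a) = pot({levof(x) : x ∈ a}). Consequently, if every member of a is a level, then pot(a) = levof(a). -/

import Mathlib

/-!
Levels are transitive and potent, and by ∈-induction any two levels are comparable under `∈`;
hence `levof a` is the unique ∈-least level including `a`. The `pot` of a set of levels is again
a level. The level `pot {levof x : x ∈ a}` includes `a`, and it is the least one: a level
`t ⊇ a` contains `levof x` for every `x ∈ a`, so `t` cannot be a subset of any `levof x`.
-/

def pot (a : ZFSet) : ZFSet :=
  ZFSet.sep (fun x => ∃ c ∈ a, x ⊆ c) (ZFSet.powerset (ZFSet.sUnion a))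

def Potent (a : ZFSet) : Prop := ∀ x, (∃ c, x ⊆ c ∧ c ∈ a) → x ∈ a

def IsHistory (h : ZFSet) : Prop := ∀ x ∈ h, x = pot (x ∩ h)

def IsLevel (s : ZFSet) : Prop := ∃ h, IsHistory h ∧ s = pot h

noncomputable def levof (a : ZFSet) : ZFSet :=
  Classical.epsilon (fun s => IsLevel s ∧ a ⊆ s ∧ ∀ t, IsLevel t → a ⊆ t → t ∉ s)

noncomputable instance : ZFSet.Definable₁ levof :=
  ZFSet.Definable₁.mk (fun p => (levof (ZFSet.mk p)).out) (fun _ => ZFSet.mk_out _)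

open ZFSet

theorem mem_pot {x a : ZFSet} : x ∈ pot a ↔ ∃ c ∈ a, x ⊆ c := by
  refine ⟨fun h => (mem_sep.1 h).2, fun ⟨c, hc, hxc⟩ => mem_sep.2 ⟨?_, c, hc, hxc⟩⟩
  exact mem_powerset.2 fun z hz => mem_sUnion.2 ⟨c, hc, hxc hz⟩

theorem subset_pot (a : ZFSet) : a ⊆ pot a := fun c hc => mem_pot.2 ⟨c, hc, subset_rfl⟩

theorem potent_pot (a : ZFSet) : Potent (pot a) := by
  rintro x ⟨c, hxc, hc⟩
  obtain ⟨d, hd, hcd⟩ := mem_pot.1 hc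
  exact mem_pot.2 ⟨d, hd, hxc.trans hcd⟩

theorem pot_eq_pot_of_subset_of_subset_pot {a b : ZFSet} (hab : a ⊆ b) (hba : b ⊆ pot a) :
    pot a = pot b := by
  ext x
  refine ⟨fun hx => ?_, fun hx => potent_pot a x ?_⟩
  · obtain ⟨c, hc, hxc⟩ := mem_pot.1 hx
    exact mem_pot.2 ⟨c, hab hc, hxc⟩
  · obtain ⟨c, hc, hxc⟩ := mem_pot.1 hx
    exact ⟨c, hxc, hba hc⟩

theorem isTransitive_pot {a : ZFSet} (ha : ∀ c ∈ a, c.IsTransitive) : (pot a).IsTransitive := by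
  intro y hy z hz
  obtain ⟨c, hc, hyc⟩ := mem_pot.1 hy
  exact mem_pot.2 ⟨c, hc, (ha c hc).subset_of_mem (hyc hz)⟩

theorem notMem_pot_of_forall_mem {a t : ZFSet} (h : ∀ c ∈ a, c ∈ t) : t ∉ pot a := by
  intro ht
  obtain ⟨c, hc, htc⟩ := mem_pot.1 ht
  exact mem_irrefl c (htc (h c hc))

namespace IsHistory

variable {h c : ZFSet}

theorem isTransitive_of_mem (hh : IsHistory h) (hc : c ∈ h) : c.IsTransitive := by
  induction c using ZFSet.inductionOn with
  | _ c ih =>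
    rw [hh c hc]
    exact isTransitive_pot fun d hd => ih d (mem_inter.1 hd).1 (mem_inter.1 hd).2

theorem inter_of_mem (hh : IsHistory h) (hc : c ∈ h) : IsHistory (c ∩ h) := by
  intro y hy
  obtain ⟨hyc, hyh⟩ := mem_inter.1 hy
  have hyc' : y ⊆ c := (hh.isTransitive_of_mem hc).subset_of_mem hyc
  have : y ∩ (c ∩ h) = y ∩ h := by
    ext z
    simp only [mem_inter]
    exact ⟨fun ⟨hzy, _, hzh⟩ => ⟨hzy, hzh⟩, fun ⟨hzy, hzh⟩ => ⟨hzy, hyc' hzy, hzh⟩⟩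
  rw [this]
  exact hh y hyh

theorem isLevel_of_mem (hh : IsHistory h) (hc : c ∈ h) : IsLevel c :=
  ⟨c ∩ h, hh.inter_of_mem hc, hh c hc⟩

end IsHistory

namespace IsLevel

variable {s t x : ZFSet}

theorem isTransitive (hs : IsLevel s) : s.IsTransitive := by
  obtain ⟨h, hh, rfl⟩ := hs
  exact isTransitive_pot fun _ => hh.isTransitive_of_mem

theorem potent (hs : IsLevel s) : Potent s := by
  obtain ⟨h, -, rfl⟩ := hs
  exact potent_pot h

theorem exists_isLevel_mem_subset (hs : IsLevel s) (hx : x ∈ s) :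
    ∃ c, IsLevel c ∧ c ∈ s ∧ x ⊆ c := by
  obtain ⟨h, hh, rfl⟩ := hs
  obtain ⟨c, hc, hxc⟩ := mem_pot.1 hx
  exact ⟨c, hh.isLevel_of_mem hc, subset_pot h hc, hxc⟩

theorem mem_trichotomous (hs : IsLevel s) (ht : IsLevel t) : s ∈ t ∨ s = t ∨ t ∈ s := by
  induction s using ZFSet.inductionOn generalizing t with
  | _ s ihs =>
    induction t using ZFSet.inductionOn with
    | _ t iht =>
      by_cases hst : s ∈ t
      · exact Or.inl hst
      by_cases hts : t ∈ s
      · exact Or.inr (Or.inr hts)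
      refine Or.inr (Or.inl (ext fun x => ⟨fun hx => ?_, fun hx => ?_⟩))
      · obtain ⟨c, hc, hcs, hxc⟩ := hs.exists_isLevel_mem_subset hx
        rcases ihs c hcs hc ht with hct | rfl | htc
        · exact ht.potent x ⟨c, hxc, hct⟩
        · exact absurd hcs hts
        · exact absurd (hs.isTransitive.subset_of_mem hcs htc) hts
      · obtain ⟨c, hc, hct, hxc⟩ := ht.exists_isLevel_mem_subset hx
        rcases iht c hct hc with hsc | rfl | hcs
        · exact absurd (ht.isTransitive.subset_of_mem hct hsc) hst
        · exact absurd hct hst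
        · exact hs.potent x ⟨c, hxc, hcs⟩

end IsLevel

theorem isLevel_pot {a : ZFSet} (ha : ∀ c ∈ a, IsLevel c) : IsLevel (pot a) := by
  set h := ZFSet.sep IsLevel (pot a)
  have hpot : pot a = pot h := pot_eq_pot_of_subset_of_subset_pot
    (fun c hc => mem_sep.2 ⟨subset_pot a hc, ha c hc⟩) (fun c hc => (mem_sep.1 hc).1)
  refine ⟨h, fun s hsh => ?_, hpot⟩
  obtain ⟨hsa, hs⟩ := mem_sep.1 hsh
  have hsub : s ⊆ pot a := (isTransitive_pot fun c hc => (ha c hc).isTransitive).subset_of_mem hsa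
  ext x
  refine ⟨fun hx => ?_, fun hx => hs.potent x ?_⟩
  · obtain ⟨c, hc, hcs, hxc⟩ := hs.exists_isLevel_mem_subset hx
    exact mem_pot.2 ⟨c, mem_inter.2 ⟨hcs, mem_sep.2 ⟨hsub hcs, hc⟩⟩, hxc⟩
  · obtain ⟨c, hc, hxc⟩ := mem_pot.1 hx
    exact ⟨c, hxc, (mem_inter.1 hc).1⟩

def IsLeastLevelSuperset (a s : ZFSet) : Prop :=
  IsLevel s ∧ a ⊆ s ∧ ∀ t, IsLevel t → a ⊆ t → t ∉ s

theorem IsLeastLevelSuperset.unique {a s t : ZFSet} (hs : IsLeastLevelSuperset a s)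
    (ht : IsLeastLevelSuperset a t) : s = t := by
  rcases hs.1.mem_trichotomous ht.1 with hst | hst | hts
  · exact absurd hst (ht.2.2 s hs.1 hs.2.1)
  · exact hst
  · exact absurd hts (hs.2.2 t ht.1 ht.2.1)

theorem exists_isLeastLevelSuperset {a : ZFSet} (h : ∃ s, IsLevel s ∧ a ⊆ s) :
    ∃ s, IsLeastLevelSuperset a s := by
  obtain ⟨s, ⟨hs, has⟩, hmin⟩ := mem_wf.has_min {s | IsLevel s ∧ a ⊆ s} h
  exact ⟨s, hs, has, fun t ht hat => hmin t ⟨ht, hat⟩⟩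

theorem isLevel_pot_image_levof {a : ZFSet} (ha : ∀ x ∈ a, IsLevel (levof x)) :
    IsLevel (pot (image levof a)) :=
  isLevel_pot fun _ hc => by
    obtain ⟨x, hx, rfl⟩ := mem_image.1 hc
    exact ha x hx

theorem subset_pot_image_levof {a : ZFSet} (ha : ∀ x ∈ a, x ⊆ levof x) :
    a ⊆ pot (image levof a) :=
  fun x hx => mem_pot.2 ⟨levof x, mem_image.2 ⟨x, hx, rfl⟩, ha x hx⟩

theorem exists_isLevel_superset (a : ZFSet) : ∃ s, IsLevel s ∧ a ⊆ s := by
  induction a using ZFSet.inductionOn with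
  | _ a ih =>
    have hlev (x : ZFSet) (hx : x ∈ a) : IsLeastLevelSuperset x (levof x) :=
      Classical.epsilon_spec (exists_isLeastLevelSuperset (ih x hx))
    exact ⟨_, isLevel_pot_image_levof fun x hx => (hlev x hx).1,
      subset_pot_image_levof fun x hx => (hlev x hx).2.1⟩

theorem isLeastLevelSuperset_levof (a : ZFSet) : IsLeastLevelSuperset a (levof a) :=
  Classical.epsilon_spec (exists_isLeastLevelSuperset (exists_isLevel_superset a))

theorem IsLeastLevelSuperset.levof_eq {a s : ZFSet} (hs : IsLeastLevelSuperset a s) :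
    levof a = s :=
  (isLeastLevelSuperset_levof a).unique hs

theorem IsLevel.levof_mem {t x : ZFSet} (ht : IsLevel t) (hx : x ∈ t) : levof x ∈ t := by
  obtain ⟨c, hc, hct, hxc⟩ := ht.exists_isLevel_mem_subset hx
  obtain ⟨hlev, -, hmin⟩ := isLeastLevelSuperset_levof x
  rcases hlev.mem_trichotomous hc with hlc | rfl | hcl
  · exact ht.isTransitive.subset_of_mem hct hlc
  · exact hct
  · exact absurd hcl (hmin c hc hxc)

theorem stmt12 (a : ZFSet) :
    levof a = pot (ZFSet.image levof a) ∧
    ((∀ x ∈ a, IsLevel x) → pot a = levof a) := by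
  refine ⟨IsLeastLevelSuperset.levof_eq ⟨?_, ?_, ?_⟩, fun ha => ?_⟩
  · exact isLevel_pot_image_levof fun x _ => (isLeastLevelSuperset_levof x).1
  · exact subset_pot_image_levof fun x _ => (isLeastLevelSuperset_levof x).2.1
  · intro t ht hat
    refine notMem_pot_of_forall_mem fun c hc => ?_
    obtain ⟨x, hx, rfl⟩ := mem_image.1 hc
    exact ht.levof_mem (hat hx)
  · exact (IsLeastLevelSuperset.levof_eq
      ⟨isLevel_pot ha, subset_pot a, fun t _ hat => notMem_pot_of_forall_mem hat⟩).symm
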